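/- arXiv:2508.16389 — 4 statements merged into one kernel-verified Lean document; each statement's English description precedes it below -/
import Mathlib

section
/- Let ι be a finite index type, each α i a type, and R a nonempty set of tuples (∀ i, α i) closed under coordinatewise mixing: for all s, t ∈ R and every tuple u with u i ∈ {s i, t i} for all i, we have u ∈ R. Then R equals the product of its coordinate projections: R = { u | ∀ i, ∃ t ∈ R, t i = u i }. -/
/-- A nonempty set of tuples closed under coordinatewise mixing equals the
product of its coordinate projections. -/
theorem stmt4 {ι : Type*} [Fintype ι] {α : ι → Type*}
    (R : Set (∀ i, α i)) (hne : R.Nonempty)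
    (hmix : ∀ s ∈ R, ∀ t ∈ R, ∀ u : ∀ i, α i,
      (∀ i, u i = s i ∨ u i = t i) → u ∈ R) :
    R = {u | ∀ i, ∃ t ∈ R, t i = u i} := by
  classical
  ext u
  constructor
  · intro hu i
    exact ⟨u, hu, rfl⟩
  · intro hu
    have key : ∀ s : Finset ι, ∃ v ∈ R, ∀ i ∈ s, v i = u i := by
      intro s
      induction s using Finset.induction_on with
      | empty => exact ⟨hne.choose, hne.choose_spec, by simp⟩
      | @insert a s hi ih =>
        obtain ⟨v, hv, hvs⟩ := ih
        obtain ⟨t, ht, hta⟩ := hu a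
        refine ⟨fun j => if j = a then t j else v j, ?_, ?_⟩
        · apply hmix v hv t ht
          intro j
          by_cases h : j = a <;> simp [h]
        · intro i hi'
          rcases Finset.mem_insert.mp hi' with h | h
          · subst h; simpa using hta
          · have : i ≠ a := by rintro rfl; exact hi h
            simp [this, hvs i h]
    obtain ⟨v, hv, hvs⟩ := key Finset.univ
    have : v = u := funext fun i => hvs i (Finset.mem_univ i)
    exact this ▸ hv
end

section
/- Let R3 ⊆ Fin 3 × Fin 3 be the relation {(0,0), (0,2), (1,1), (2,0), (2,2)}. For t ∈ Fin n define the threshold map f_t : Fin n → Fin 3 by f_t(x) = 0 if x < t, f_t(x) = 1 if x = t, and f_t(x) = 2 if x > t. Then for every bijection σ : Fin n → Fin n, the set { (x, y) ∈ Fin n × Fin n | ∀ a : Fin n, (f_a(x), f_{σ(a)}(y)) ∈ R3 } equals the graph { (x, σ(x)) | x ∈ Fin n } of σ. -/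
/-- The relation `R3 = {00, 02, 11, 20, 22}` over `Fin 3`. -/
def R3 : Set (Fin 3 × Fin 3) := {(0, 0), (0, 2), (1, 1), (2, 0), (2, 2)}

/-- The monotone threshold map `f_t : Fin n → Fin 3`. -/
def threshold {n : ℕ} (t x : Fin n) : Fin 3 :=
  if x < t then 0 else if x = t then 1 else 2

lemma threshold_self {n : ℕ} (x : Fin n) : threshold x x = 1 := by
  simp [threshold]

/-- `R3` together with threshold maps defines the graph of every permutation. -/
theorem stmt6 (n : ℕ) (σ : Equiv.Perm (Fin n)) :
    {p : Fin n × Fin n | ∀ a : Fin n, (threshold a p.1, threshold (σ a) p.2) ∈ R3}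
      = {p : Fin n × Fin n | p.2 = σ p.1} := by
  ext ⟨x, y⟩
  simp only [Set.mem_setOf_eq]
  constructor
  · intro h
    have hx := h x
    rw [threshold_self] at hx
    simp only [R3, Set.mem_insert_iff, Set.mem_singleton_iff, Prod.mk.injEq] at hx
    rcases hx with ⟨h1, _⟩ | ⟨h1, _⟩ | ⟨_, h2⟩ | ⟨h1, _⟩ | ⟨h1, _⟩
    · exact absurd h1 (by decide)
    · exact absurd h1 (by decide)
    · unfold threshold at h2
      split_ifs at h2 with h3 h4
      · exact absurd h2 (by decide)
      · exact h4
      · exact absurd h2 (by decide)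
    · exact absurd h1 (by decide)
    · exact absurd h1 (by decide)
  · rintro rfl a
    by_cases hax : a = x
    · subst hax
      rw [threshold_self, threshold_self]
      simp [R3]
    · have hne : σ a ≠ σ x := fun h => hax (σ.injective h)
      unfold threshold
      rcases lt_trichotomy x a with h | h | h
      · simp only [if_pos h]
        by_cases hlt : σ x < σ a
        · simp [R3, hlt]
        · simp [R3, hlt, hne.symm]
      · exact absurd h.symm hax
      · have h1 : ¬ x < a := not_lt.mpr h.le
        simp only [if_neg h1, if_neg (Ne.symm hax)]
        by_cases hlt : σ x < σ a
        · simp [R3, hlt]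
        · simp [R3, hlt, hne.symm]
end

section
/- Let s, t be positive natural numbers and let L₁, …, L_t be finite nonempty subsets of ℕ each of cardinality at least s·t. Then there exist subsets L'ᵢ ⊆ Lᵢ with |L'ᵢ| = s for each i, such that the spans [min L'ᵢ, max L'ᵢ] are pairwise disjoint intervals. -/
/-- From a finset of naturals with at least `s` elements one can extract the
`s` smallest elements: a subset of size `s` all of whose elements are smaller
than every remaining element. -/
lemma exists_prefix : ∀ (s : ℕ) (A : Finset ℕ), s ≤ A.card →
    ∃ B : Finset ℕ, B ⊆ A ∧ B.card = s ∧ ∀ x ∈ B, ∀ y ∈ A, y ∉ B → x < y := by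
  intro s
  induction s with
  | zero =>
    intro A _
    exact ⟨∅, Finset.empty_subset _, Finset.card_empty, by simp⟩
  | succ s ih =>
    intro A hA
    obtain ⟨B, hBA, hBcard, hBlt⟩ := ih A (le_trans (Nat.le_succ s) hA)
    have hne : (A \ B).Nonempty := by
      rw [← Finset.card_pos, Finset.card_sdiff_of_subset hBA, hBcard]
      omega
    set x := (A \ B).min' hne with hx
    have hxmem : x ∈ A \ B := (A \ B).min'_mem hne
    have hxA : x ∈ A := (Finset.mem_sdiff.mp hxmem).1
    have hxB : x ∉ B := (Finset.mem_sdiff.mp hxmem).2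
    refine ⟨insert x B, ?_, ?_, ?_⟩
    · exact Finset.insert_subset hxA hBA
    · rw [Finset.card_insert_of_notMem hxB, hBcard]
    · intro a ha y hyA hyB
      rcases Finset.mem_insert.mp ha with rfl | haB
      · have hy : y ∈ A \ B := Finset.mem_sdiff.mpr ⟨hyA, fun h => hyB (Finset.mem_insert_of_mem h)⟩
        have := (A \ B).min'_le y hy
        have hne' : y ≠ x := fun h => hyB (h ▸ Finset.mem_insert_self x B)
        omega
      · exact hBlt a haB y hyA (fun h => hyB (Finset.mem_insert_of_mem h))

lemma aux_spans {ι : Type} [DecidableEq ι] (s : ℕ) (hs : 0 < s) :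
    ∀ (n : ℕ) (I : Finset ι) (L : ι → Finset ℕ), I.card = n →
    (∀ i ∈ I, s * n ≤ (L i).card) →
    ∃ L' : ι → Finset ℕ, (∀ i ∈ I, L' i ⊆ L i) ∧ (∀ i ∈ I, (L' i).card = s) ∧
      ∀ i ∈ I, ∀ j ∈ I, i ≠ j →
        Disjoint (Set.Icc (sInf (↑(L' i) : Set ℕ)) (sSup (↑(L' i) : Set ℕ)))
                 (Set.Icc (sInf (↑(L' j) : Set ℕ)) (sSup (↑(L' j) : Set ℕ))) := by
  intro n
  induction n with
  | zero =>
    intro I L hI _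
    have : I = ∅ := Finset.card_eq_zero.mp hI
    subst this
    exact ⟨fun _ => ∅, by simp, by simp, by simp⟩
  | succ n ih =>
    intro I L hI hcard
    -- choose prefixes for each index
    have hex : ∀ i : ι, ∃ B : Finset ℕ, s ≤ (L i).card →
        B ⊆ L i ∧ B.card = s ∧ ∀ x ∈ B, ∀ y ∈ L i, y ∉ B → x < y := by
      intro i
      by_cases h : s ≤ (L i).card
      · obtain ⟨B, h1, h2, h3⟩ := exists_prefix s (L i) h
        exact ⟨B, fun _ => ⟨h1, h2, h3⟩⟩
      · exact ⟨∅, fun h' => absurd h' h⟩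
    choose B hB using hex
    have hIne : I.Nonempty := by
      rw [← Finset.card_pos, hI]; omega
    have hsle : ∀ i ∈ I, s ≤ (L i).card := fun i hi => by
      have := hcard i hi
      have : s * 1 ≤ s * (n + 1) := Nat.mul_le_mul_left s (by omega)
      omega
    have hBprop : ∀ i ∈ I, B i ⊆ L i ∧ (B i).card = s ∧
        ∀ x ∈ B i, ∀ y ∈ L i, y ∉ B i → x < y := fun i hi => hB i (hsle i hi)
    have hBne : ∀ i ∈ I, (B i).Nonempty := fun i hi => by
      rw [← Finset.card_pos, (hBprop i hi).2.1]; exact hs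
    -- pick index minimizing the max of its prefix
    classical
    obtain ⟨i₀, hi₀I, hi₀min⟩ := I.exists_min_image
      (fun i => if h : i ∈ I then (B i).max' (hBne i h) else 0) hIne
    set m : ℕ := (B i₀).max' (hBne i₀ hi₀I) with hm
    -- remaining sets after removing elements ≤ m
    set M : ι → Finset ℕ := fun j => (L j).filter (fun x => m < x) with hM
    have hMcard : ∀ j ∈ I.erase i₀, s * n ≤ (M j).card := by
      intro j hj
      have hjI : j ∈ I := Finset.mem_of_mem_erase hj
      have hjne : j ≠ i₀ := Finset.ne_of_mem_erase hj
      have hmj : m ≤ (B j).max' (hBne j hjI) := by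
        have h := hi₀min j hjI
        rwa [dif_pos hi₀I, dif_pos hjI] at h
      -- elements of L j that are ≤ m lie in B j
      have hsub : (L j).filter (fun x => ¬ m < x) ⊆ B j := by
        intro x hx
        rw [Finset.mem_filter] at hx
        by_contra hxB
        have := (hBprop j hjI).2.2 ((B j).max' (hBne j hjI)) ((B j).max'_mem _) x hx.1 hxB
        omega
      have h1 : ((L j).filter (fun x => ¬ m < x)).card ≤ s := by
        calc ((L j).filter (fun x => ¬ m < x)).card ≤ (B j).card := Finset.card_le_card hsub
        _ = s := (hBprop j hjI).2.1
      have h2 := Finset.card_filter_add_card_filter_not (s := L j)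
        (p := fun x => m < x)
      have h3 := hcard j hjI
      have : s * (n + 1) = s * n + s := by ring
      simp only [hM]
      omega
    obtain ⟨L'', h1'', h2'', h3''⟩ := ih (I.erase i₀) M
      (by rw [Finset.card_erase_of_mem hi₀I, hI]; omega) hMcard
    -- assemble
    refine ⟨fun i => if i = i₀ then B i₀ else L'' i, ?_, ?_, ?_⟩
    · intro i hi
      by_cases h : i = i₀
      · subst h; simpa using (hBprop i hi).1
      · simp only [if_neg h]
        exact (h1'' i (Finset.mem_erase.mpr ⟨h, hi⟩)).trans (Finset.filter_subset _ _)
    · intro i hi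
      by_cases h : i = i₀
      · subst h; simpa using (hBprop i hi).2.1
      · simp only [if_neg h]
        exact h2'' i (Finset.mem_erase.mpr ⟨h, hi⟩)
    · -- disjointness
      have key : ∀ j ∈ I.erase i₀,
          Disjoint (Set.Icc (sInf (↑(B i₀) : Set ℕ)) (sSup (↑(B i₀) : Set ℕ)))
                   (Set.Icc (sInf (↑(L'' j) : Set ℕ)) (sSup (↑(L'' j) : Set ℕ))) := by
        intro j hj
        have hjne : (L'' j).Nonempty := by
          rw [← Finset.card_pos, h2'' j hj]; exact hs
        have hsup : sSup (↑(B i₀) : Set ℕ) = m := (hBne i₀ hi₀I).csSup_eq_max'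
        have hinf : m < sInf (↑(L'' j) : Set ℕ) := by
          rw [hjne.csInf_eq_min']
          have := h1'' j hj ((L'' j).min'_mem hjne)
          simp only [hM, Finset.mem_filter] at this
          exact this.2
        rw [Set.disjoint_left]
        intro a ha hb
        have h1 := ha.2
        have h2 := hb.1
        rw [hsup] at h1
        omega
      intro i hi j hj hij
      by_cases h : i = i₀
      · subst h
        have : j ≠ i := fun e => hij e.symm
        simp only [if_pos rfl, if_neg this]
        exact key j (Finset.mem_erase.mpr ⟨this, hj⟩)
      · by_cases h' : j = i₀
        · subst h'
          simp only [if_neg h, if_pos rfl]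
          exact (key i (Finset.mem_erase.mpr ⟨h, hi⟩)).symm
        · simp only [if_neg h, if_neg h']
          exact h3'' i (Finset.mem_erase.mpr ⟨h, hi⟩) j (Finset.mem_erase.mpr ⟨h', hj⟩) hij

/-- Disjoint spans: from `t` finite sets of naturals of size at least `s·t`
one can extract subsets of size `s` with pairwise disjoint spans. -/
theorem stmt9 (s t : ℕ) (hs : 0 < s) (ht : 0 < t)
    (L : Fin t → Finset ℕ) (hL : ∀ i, s * t ≤ (L i).card) :
    ∃ L' : Fin t → Finset ℕ,
      (∀ i, L' i ⊆ L i) ∧ (∀ i, (L' i).card = s) ∧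
      ∀ i j, i ≠ j →
        Disjoint (Set.Icc (sInf (↑(L' i) : Set ℕ)) (sSup (↑(L' i) : Set ℕ)))
                 (Set.Icc (sInf (↑(L' j) : Set ℕ)) (sSup (↑(L' j) : Set ℕ))) := by
  obtain ⟨L', h1, h2, h3⟩ := aux_spans s hs t Finset.univ L (Finset.card_fin t)
    (fun i _ => hL i)
  exact ⟨L', fun i => h1 i (Finset.mem_univ i), fun i => h2 i (Finset.mem_univ i),
    fun i j hij => h3 i (Finset.mem_univ i) j (Finset.mem_univ j) hij⟩
end

section
/- Let V be a finite type and α a type, and let S be a set of partial assignments V → Option α containing the all-none assignment, closed under union of disjoint assignments (if f, g ∈ S are disjoint then f ⊔ g ∈ S) and under difference (if f ∈ S and f ⊔ g ∈ S with f, g disjoint, then g ∈ S). Then every element of S is the union of a pairwise-disjoint finite family of minimal nontrivial elements of S. -/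
namespace Stmt13

variable {V α : Type*}

/-- Two partial assignments are disjoint if nowhere both defined. -/
def PDisjoint (f g : V → Option α) : Prop := ∀ v, f v = none ∨ g v = none

/-- Union of two partial assignments (left-biased; agrees with the disjoint
union when the assignments are disjoint). -/
def pUnion (f g : V → Option α) : V → Option α := fun v => (f v).elim (g v) some

/-- `f` extends `g`: `f` agrees with `g` wherever `g` is defined. -/
def Extends (f g : V → Option α) : Prop := ∀ v, g v ≠ none → f v = g v

/-- The trivial (all-`none`) assignment. -/
def trivAsg : V → Option α := fun _ => none

/-- `f` is a minimal nontrivial element of `S`. -/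
def MinimalIn (S : Set (V → Option α)) (f : V → Option α) : Prop :=
  f ∈ S ∧ f ≠ trivAsg ∧
    ∀ g ∈ S, g ≠ trivAsg → Extends f g → g = f

end Stmt13

/-! Induct on the size of the domain of `f`. Among the nontrivial elements of `S` that `f`
extends, one with the smallest domain is minimal; closure under difference puts the rest of `f`
in `S`, and the rest has a strictly smaller domain. -/

namespace Stmt13

variable {V α : Type*}

theorem ne_trivAsg_iff {f : V → Option α} : f ≠ trivAsg ↔ ∃ v, f v ≠ none := by
  simp [trivAsg, funext_iff]

theorem PDisjoint.symm {f g : V → Option α} (h : PDisjoint f g) : PDisjoint g f :=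
  fun v => (h v).symm

theorem Extends.trans {f g h : V → Option α} (hfg : Extends f g) (hgh : Extends g h) :
    Extends f h := fun v hv => by
  rw [← hgh v hv]
  exact hfg v (hgh v hv ▸ hv)

def pDiff (f m : V → Option α) : V → Option α := fun v => (m v).elim (f v) fun _ => none

theorem pDiff_eq_some {f m : V → Option α} {v : V} {a : α} :
    pDiff f m v = some a ↔ m v = none ∧ f v = some a := by
  cases h : m v <;> simp [pDiff, h]

theorem pDisjoint_pDiff (f m : V → Option α) : PDisjoint m (pDiff f m) := fun v => by
  cases h : m v <;> simp [pDiff, h]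

theorem pUnion_pDiff {f m : V → Option α} (h : Extends f m) : pUnion m (pDiff f m) = f := by
  funext v
  cases hm : m v with
  | none => simp [pUnion, pDiff, hm]
  | some a => simp [pUnion, hm, h v (by simp [hm])]

section Domain

variable [Fintype V]

def dom (f : V → Option α) : Finset V := Finset.univ.filter fun v => (f v).isSome

theorem mem_dom {f : V → Option α} {v : V} : v ∈ dom f ↔ f v ≠ none := by
  simp [dom, Option.isSome_iff_ne_none]

theorem Extends.dom_subset {f g : V → Option α} (h : Extends f g) : dom g ⊆ dom f :=
  fun v hv => mem_dom.2 (h v (mem_dom.1 hv) ▸ mem_dom.1 hv)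

theorem Extends.eq_of_dom_subset {f g : V → Option α} (h : Extends f g) (hd : dom f ⊆ dom g) :
    f = g := by
  funext v
  by_cases hg : g v = none
  · rw [hg]
    by_contra hf
    exact (mem_dom.1 (hd (mem_dom.2 hf))) hg
  · exact h v hg

theorem dom_pDiff_ssubset {f m : V → Option α} (h : Extends f m) (hm : m ≠ trivAsg) :
    dom (pDiff f m) ⊂ dom f := by
  obtain ⟨v, hv⟩ := ne_trivAsg_iff.1 hm
  refine Finset.ssubset_iff_of_subset (fun w hw => ?_) |>.2 ⟨v, ?_, ?_⟩
  · obtain ⟨a, ha⟩ := Option.ne_none_iff_exists'.1 (mem_dom.1 hw)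
    exact mem_dom.2 (by simp [(pDiff_eq_some.1 ha).2])
  · exact mem_dom.2 (h v hv ▸ hv)
  · obtain ⟨a, ha⟩ := Option.ne_none_iff_exists'.1 hv
    simp [mem_dom, pDiff, ha]

theorem exists_minimalIn_extends {S : Set (V → Option α)} {f : V → Option α} (hf : f ∈ S)
    (hft : f ≠ trivAsg) : ∃ m, MinimalIn S m ∧ Extends f m := by
  obtain ⟨m, ⟨hmS, hmt, hfm⟩, hleast⟩ := (measure fun g : V → Option α => (dom g).card).wf.has_min
    {g | g ∈ S ∧ g ≠ trivAsg ∧ Extends f g} ⟨f, hf, hft, fun _ _ => rfl⟩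
  refine ⟨m, ⟨hmS, hmt, fun g hgS hgt hmg => ?_⟩, hfm⟩
  have hcard : (dom m).card ≤ (dom g).card :=
    not_lt.1 (hleast g ⟨hgS, hgt, hfm.trans hmg⟩)
  exact (hmg.eq_of_dom_subset (Finset.eq_of_subset_of_card_le hmg.dom_subset hcard).ge).symm

end Domain

structure IsMinimalDecomposition (S : Set (V → Option α)) (f : V → Option α)
    (F : Finset (V → Option α)) : Prop where
  minimalIn : ∀ g ∈ F, MinimalIn S g
  pairwise_pDisjoint : (F : Set (V → Option α)).Pairwise PDisjoint
  eq_some_iff : ∀ v a, f v = some a ↔ ∃ g ∈ F, g v = some a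

theorem isMinimalDecomposition_trivAsg (S : Set (V → Option α)) :
    IsMinimalDecomposition S trivAsg ∅ :=
  ⟨by simp, by simp, by simp [trivAsg]⟩

theorem IsMinimalDecomposition.insert [DecidableEq (V → Option α)] {S : Set (V → Option α)}
    {f m : V → Option α} {F : Finset (V → Option α)}
    (hF : IsMinimalDecomposition S (pDiff f m) F) (hm : MinimalIn S m) (hfm : Extends f m) :
    IsMinimalDecomposition S f (insert m F) := by
  have hdisj : ∀ g ∈ F, PDisjoint m g := fun g hg v => by
    cases hgv : g v with
    | none => exact .inr rfl
    | some a => exact .inl (pDiff_eq_some.1 ((hF.eq_some_iff v a).2 ⟨g, hg, hgv⟩)).1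
  refine ⟨?_, ?_, fun v a => ?_⟩
  · simpa [hm] using hF.minimalIn
  · rw [Finset.coe_insert]
    exact hF.pairwise_pDisjoint.insert fun g hg _ => ⟨hdisj g hg, (hdisj g hg).symm⟩
  · rw [← pUnion_pDiff hfm]
    cases hmv : m v <;> simp [pUnion, hmv, ← hF.eq_some_iff, pDiff_eq_some]

theorem exists_isMinimalDecomposition [Fintype V] {S : Set (V → Option α)}
    (hdiff : ∀ f ∈ S, ∀ g : V → Option α, PDisjoint f g → pUnion f g ∈ S → g ∈ S)
    {f : V → Option α} (hf : f ∈ S) : ∃ F, IsMinimalDecomposition S f F := by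
  classical
  induction hn : (dom f).card using Nat.strong_induction_on generalizing f with
  | _ n ih =>
  by_cases hft : f = trivAsg
  · exact ⟨∅, hft ▸ isMinimalDecomposition_trivAsg S⟩
  obtain ⟨m, hm, hfm⟩ := exists_minimalIn_extends hf hft
  have hrest : pDiff f m ∈ S :=
    hdiff m hm.1 _ (pDisjoint_pDiff f m) (by rwa [pUnion_pDiff hfm])
  obtain ⟨F, hF⟩ := ih _ (hn ▸ Finset.card_lt_card (dom_pDiff_ssubset hfm hm.2.1)) hrest rfl
  exact ⟨insert m F, hF.insert hm hfm⟩

end Stmt13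

open Stmt13 in
theorem stmt13_general {V α : Type*} [Fintype V]
    (S : Set (V → Option α))
    (hdiff : ∀ f ∈ S, ∀ g : V → Option α, PDisjoint f g →
        pUnion f g ∈ S → g ∈ S) :
    ∀ f ∈ S, ∃ F : Finset (V → Option α),
      (∀ g ∈ F, MinimalIn S g) ∧
      (∀ g ∈ F, ∀ g' ∈ F, g ≠ g' → PDisjoint g g') ∧
      (∀ v : V, ∀ a : α, f v = some a ↔ ∃ g ∈ F, g v = some a) := by
  intro f hf
  obtain ⟨F, hF⟩ := exists_isMinimalDecomposition hdiff hf
  exact ⟨F, hF.minimalIn, fun _ hg _ hg' => hF.pairwise_pDisjoint hg hg', hF.eq_some_iff⟩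

open Stmt13 in
/-- Every member of a family of partial assignments containing the trivial
assignment and closed under disjoint union and difference is the union of a
pairwise-disjoint finite family of minimal nontrivial elements. -/
theorem stmt13 {V α : Type*} [Fintype V] [DecidableEq V] [DecidableEq α]
    (S : Set (V → Option α))
    (htriv : trivAsg ∈ S)
    (hunion : ∀ f ∈ S, ∀ g ∈ S, PDisjoint f g → pUnion f g ∈ S)
    (hdiff : ∀ f ∈ S, ∀ g : V → Option α, PDisjoint f g →
        pUnion f g ∈ S → g ∈ S) :
    ∀ f ∈ S, ∃ F : Finset (V → Option α),
      (∀ g ∈ F, MinimalIn S g) ∧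
      (∀ g ∈ F, ∀ g' ∈ F, g ≠ g' → PDisjoint g g') ∧
      (∀ v : V, ∀ a : α, f v = some a ↔ ∃ g ∈ F, g v = some a) :=
  stmt13_general S hdiff
end
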